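/- Consider the finite-dimensional ODE system for c_k, |k| ≤ N: dc_k/dt = F_k where F_k = −ik²c_k + i∑ n₃ c_{n₁}c_{n₂}conj(c_{n₃}) δ_{n₁+n₂−n₃−k} + (i/2)∑ c_{n₁}c_{n₂}c_{n₃}conj(c_{n₄})conj(c_{n₅}) δ_{n₁+n₂+n₃−n₄−n₅−k} − iψ(c)c_k − i m(c)∑ c_{n₁}c_{n₂}conj(c_{n₃}) δ_{n₁+n₂−n₃−k}, with m(c) = ∑_j |c_j|² and ψ(c) = −2∑_k k|c_k|² + ½∑ c_{n₁}c_{n₂}conj(c_{n₃})conj(c_{n₄}) δ_{n₁+n₂−n₃−n₄} − (∑_j|c_j|²)², all frequency indices restricted to |n_j| ≤ N. Then the real divergence of this vector field vanishes: ∑_{|k|≤N} (∂F_k/∂c_k + ∂(conj F_k)/∂(conj c_k)) = 0, and consequently the flow preserves Lebesgue measure ∏_{|j|≤N} da_j db_j (c_j = a_j + i b_j). -/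

import Mathlib

open Finset

/-- Frequency range |n| ≤ N. -/
noncomputable def freqS (N : ℕ) : Finset ℤ := Finset.Icc (-(N : ℤ)) (N : ℤ)

/-- m(c) = ∑_{|j|≤N} |c_j|². -/
noncomputable def massN (N : ℕ) (c : ℤ → ℂ) : ℝ := ∑ j ∈ freqS N, ‖c j‖ ^ 2

/-- ψ(c) = −2∑ k|c_k|² + ½ ∑ c_{n₁}c_{n₂} c̄_{n₃} c̄_{n₄} δ_{n₁+n₂−n₃−n₄} − (∑|c_j|²)². -/
noncomputable def psiN (N : ℕ) (c : ℤ → ℂ) : ℂ :=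
  -2 * ∑ k ∈ freqS N, (k : ℂ) * ((‖c k‖ ^ 2 : ℝ) : ℂ)
    + (1 / 2) * ∑ p ∈ ((freqS N ×ˢ freqS N ×ˢ freqS N ×ˢ freqS N).filter
        (fun p => p.1 + p.2.1 - p.2.2.1 - p.2.2.2 = 0)),
        c p.1 * c p.2.1 * (starRingEnd ℂ) (c p.2.2.1) * (starRingEnd ℂ) (c p.2.2.2)
    - ((massN N c : ℝ) : ℂ) ^ 2

/-- The vector field F_k of the Fourier-truncated gauged DNLS. -/
noncomputable def fieldF (N : ℕ) (k : ℤ) (c : ℤ → ℂ) : ℂ :=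
  -Complex.I * (k : ℂ) ^ 2 * c k
    + Complex.I * ∑ p ∈ ((freqS N ×ˢ freqS N ×ˢ freqS N).filter
        (fun p => p.1 + p.2.1 - p.2.2 = k)),
        (p.2.2 : ℂ) * c p.1 * c p.2.1 * (starRingEnd ℂ) (c p.2.2)
    + (Complex.I / 2) * ∑ p ∈ ((freqS N ×ˢ freqS N ×ˢ freqS N ×ˢ freqS N ×ˢ freqS N).filter
        (fun p => p.1 + p.2.1 + p.2.2.1 - p.2.2.2.1 - p.2.2.2.2 = k)),
        c p.1 * c p.2.1 * c p.2.2.1 * (starRingEnd ℂ) (c p.2.2.2.1)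
          * (starRingEnd ℂ) (c p.2.2.2.2)
    - Complex.I * psiN N c * c k
    - Complex.I * ((massN N c : ℝ) : ℂ) * ∑ p ∈ ((freqS N ×ˢ freqS N ×ˢ freqS N).filter
        (fun p => p.1 + p.2.1 - p.2.2 = k)),
        c p.1 * c p.2.1 * (starRingEnd ℂ) (c p.2.2)


open ComplexConjugate

/-! ### Auxiliary definitions -/

/-- Kronecker delta. -/
def eK (k n : ℤ) : ℂ := if n = k then 1 else 0

noncomputable def T3 (N : ℕ) (k : ℤ) : Finset (ℤ × ℤ × ℤ) :=
  (freqS N ×ˢ freqS N ×ˢ freqS N).filter fun p => p.1 + p.2.1 - p.2.2 = k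

noncomputable def T4 (N : ℕ) : Finset (ℤ × ℤ × ℤ × ℤ) :=
  (freqS N ×ˢ freqS N ×ˢ freqS N ×ˢ freqS N).filter
    fun p => p.1 + p.2.1 - p.2.2.1 - p.2.2.2 = 0

noncomputable def T5 (N : ℕ) (k : ℤ) : Finset (ℤ × ℤ × ℤ × ℤ × ℤ) :=
  (freqS N ×ˢ freqS N ×ˢ freqS N ×ˢ freqS N ×ˢ freqS N).filter
    fun p => p.1 + p.2.1 + p.2.2.1 - p.2.2.2.1 - p.2.2.2.2 = k

noncomputable def mC (N : ℕ) (c : ℤ → ℂ) : ℂ := ∑ j ∈ freqS N, c j * conj (c j)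

noncomputable def cub (N : ℕ) (k : ℤ) (c : ℤ → ℂ) : ℂ :=
  ∑ p ∈ T3 N k, c p.1 * c p.2.1 * conj (c p.2.2)

noncomputable def cubW (N : ℕ) (k : ℤ) (c : ℤ → ℂ) : ℂ :=
  ∑ p ∈ T3 N k, (p.2.2 : ℂ) * c p.1 * c p.2.1 * conj (c p.2.2)

noncomputable def quin (N : ℕ) (k : ℤ) (c : ℤ → ℂ) : ℂ :=
  ∑ p ∈ T5 N k,
    c p.1 * c p.2.1 * c p.2.2.1 * conj (c p.2.2.2.1) * conj (c p.2.2.2.2)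

noncomputable def psiP (N : ℕ) (c : ℤ → ℂ) : ℂ :=
  -2 * ∑ j ∈ freqS N, (j : ℂ) * (c j * conj (c j))
    + (1 / 2) * ∑ p ∈ T4 N,
        c p.1 * c p.2.1 * conj (c p.2.2.1) * conj (c p.2.2.2)
    - mC N c * mC N c

/-! ### A/B (Wirtinger) coefficient definitions -/

noncomputable def mA (N : ℕ) (k : ℤ) (c : ℤ → ℂ) : ℂ := ∑ j ∈ freqS N, eK k j * conj (c j)
noncomputable def mB (N : ℕ) (k : ℤ) (c : ℤ → ℂ) : ℂ := ∑ j ∈ freqS N, c j * eK k j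

noncomputable def s1A (N : ℕ) (k : ℤ) (c : ℤ → ℂ) : ℂ :=
  ∑ j ∈ freqS N, eK k j * ((j : ℂ) * conj (c j))
noncomputable def s1B (N : ℕ) (k : ℤ) (c : ℤ → ℂ) : ℂ :=
  ∑ j ∈ freqS N, (j : ℂ) * (c j * eK k j)

noncomputable def cubA (N : ℕ) (k : ℤ) (c : ℤ → ℂ) : ℂ :=
  ∑ p ∈ T3 N k,
    (eK k p.1 * (c p.2.1 * conj (c p.2.2)) + eK k p.2.1 * (c p.1 * conj (c p.2.2)))
noncomputable def cubB (N : ℕ) (k : ℤ) (c : ℤ → ℂ) : ℂ :=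
  ∑ p ∈ T3 N k, c p.1 * c p.2.1 * eK k p.2.2

noncomputable def cubWA (N : ℕ) (k : ℤ) (c : ℤ → ℂ) : ℂ :=
  ∑ p ∈ T3 N k, (p.2.2 : ℂ) *
    (eK k p.1 * (c p.2.1 * conj (c p.2.2)) + eK k p.2.1 * (c p.1 * conj (c p.2.2)))
noncomputable def cubWB (N : ℕ) (k : ℤ) (c : ℤ → ℂ) : ℂ :=
  ∑ p ∈ T3 N k, (p.2.2 : ℂ) * (c p.1 * c p.2.1 * eK k p.2.2)

noncomputable def q4A (N : ℕ) (k : ℤ) (c : ℤ → ℂ) : ℂ :=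
  ∑ p ∈ T4 N,
    (eK k p.1 * (c p.2.1 * (conj (c p.2.2.1) * conj (c p.2.2.2)))
      + eK k p.2.1 * (c p.1 * (conj (c p.2.2.1) * conj (c p.2.2.2))))
noncomputable def q4B (N : ℕ) (k : ℤ) (c : ℤ → ℂ) : ℂ :=
  ∑ p ∈ T4 N,
    (c p.1 * c p.2.1) * (eK k p.2.2.1 * conj (c p.2.2.2) + conj (c p.2.2.1) * eK k p.2.2.2)

noncomputable def quinA (N : ℕ) (k : ℤ) (c : ℤ → ℂ) : ℂ :=
  ∑ p ∈ T5 N k,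
    (eK k p.1 * (c p.2.1 * c p.2.2.1 * (conj (c p.2.2.2.1) * conj (c p.2.2.2.2)))
      + eK k p.2.1 * (c p.1 * c p.2.2.1 * (conj (c p.2.2.2.1) * conj (c p.2.2.2.2)))
      + eK k p.2.2.1 * (c p.1 * c p.2.1 * (conj (c p.2.2.2.1) * conj (c p.2.2.2.2))))
noncomputable def quinB (N : ℕ) (k : ℤ) (c : ℤ → ℂ) : ℂ :=
  ∑ p ∈ T5 N k,
    (c p.1 * c p.2.1 * c p.2.2.1) *
      (eK k p.2.2.2.1 * conj (c p.2.2.2.2) + conj (c p.2.2.2.1) * eK k p.2.2.2.2)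

noncomputable def psiA (N : ℕ) (k : ℤ) (c : ℤ → ℂ) : ℂ :=
  -2 * s1A N k c + (1 / 2) * q4A N k c - (mA N k c * mC N c + mC N c * mA N k c)
noncomputable def psiB (N : ℕ) (k : ℤ) (c : ℤ → ℂ) : ℂ :=
  -2 * s1B N k c + (1 / 2) * q4B N k c - (mB N k c * mC N c + mC N c * mB N k c)

noncomputable def AA (N : ℕ) (k : ℤ) (c : ℤ → ℂ) : ℂ :=
  -Complex.I * (k : ℂ) ^ 2 * eK k k
    + Complex.I * cubWA N k c
    + (Complex.I / 2) * quinA N k c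
    - Complex.I * (psiA N k c * c k + psiP N c * eK k k)
    - Complex.I * (mA N k c * cub N k c + mC N c * cubA N k c)

noncomputable def BB (N : ℕ) (k : ℤ) (c : ℤ → ℂ) : ℂ :=
  Complex.I * cubWB N k c
    + (Complex.I / 2) * quinB N k c
    - Complex.I * (psiB N k c * c k)
    - Complex.I * (mB N k c * cub N k c + mC N c * cubB N k c)

/-! ### Polynomial form of the field -/

lemma massN_eq (N : ℕ) (c : ℤ → ℂ) : ((massN N c : ℝ) : ℂ) = mC N c := by
  unfold massN mC
  push_cast
  exact Finset.sum_congr rfl fun j _ => by rw [Complex.mul_conj']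

lemma psiN_eq (N : ℕ) (c : ℤ → ℂ) : psiN N c = psiP N c := by
  have h : ∀ j ∈ freqS N,
      (j : ℂ) * ((‖c j‖ ^ 2 : ℝ) : ℂ) = (j : ℂ) * (c j * conj (c j)) := by
    intro j _
    congr 1
    rw [Complex.mul_conj']
    push_cast
    ring
  unfold psiN psiP T4
  rw [massN_eq, sq, Finset.sum_congr rfl h]

lemma fieldF_eq (N : ℕ) (k : ℤ) (c : ℤ → ℂ) :
    fieldF N k c = -Complex.I * (k : ℂ) ^ 2 * c k + Complex.I * cubW N k c
      + (Complex.I / 2) * quin N k c - Complex.I * psiP N c * c k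
      - Complex.I * mC N c * cub N k c := by
  unfold fieldF cub cubW quin T3 T5
  rw [massN_eq, psiN_eq]

set_option maxHeartbeats 1000000
/-! ### Derivative lemmas -/

section Deriv

variable {N : ℕ} {k : ℤ} {c : ℤ → ℂ} {v : ℂ}

lemma hasDerivAt_coord (n : ℤ) :
    HasDerivAt (fun t : ℝ => c n + ↑t * (v * eK k n)) (v * eK k n) 0 := by
  simpa using (Complex.ofRealCLM.hasDerivAt.mul_const (v * eK k n)).const_add (c n)

lemma conj_eK (k n : ℤ) : conj (eK k n) = eK k n := by
  unfold eK; split <;> simp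

lemma hasDerivAt_coord_conj (n : ℤ) :
    HasDerivAt (fun t : ℝ => conj (c n + ↑t * (v * eK k n))) (conj v * eK k n) 0 := by
  have h := (hasDerivAt_coord (k := k) (c := c) (v := v) n).star
  simp only [Complex.star_def, map_mul, conj_eK] at h
  exact h

lemma hasDerivAt_mC :
    HasDerivAt (fun t : ℝ => mC N (fun n => c n + ↑t * (v * eK k n)))
      (v * mA N k c + conj v * mB N k c) 0 := by
  have H : HasDerivAt (fun t : ℝ => mC N (fun n => c n + ↑t * (v * eK k n)))
      (∑ j ∈ freqS N,
        (v * eK k j * conj (c j) + c j * (conj v * eK k j))) 0 := by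
    unfold mC
    refine HasDerivAt.fun_sum fun j _ => ?_
    simpa using (hasDerivAt_coord j).fun_mul (hasDerivAt_coord_conj j)
  convert H using 1
  unfold mA mB
  rw [Finset.mul_sum, Finset.mul_sum, ← Finset.sum_add_distrib]
  exact Finset.sum_congr rfl fun j _ => by ring

lemma hasDerivAt_s1 :
    HasDerivAt (fun t : ℝ => ∑ j ∈ freqS N,
        (j : ℂ) * ((c j + ↑t * (v * eK k j)) * conj (c j + ↑t * (v * eK k j))))
      (v * s1A N k c + conj v * s1B N k c) 0 := by
  have H : HasDerivAt (fun t : ℝ => ∑ j ∈ freqS N,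
      (j : ℂ) * ((c j + ↑t * (v * eK k j)) * conj (c j + ↑t * (v * eK k j))))
      (∑ j ∈ freqS N,
        (j : ℂ) * (v * eK k j * conj (c j) + c j * (conj v * eK k j))) 0 := by
    refine HasDerivAt.fun_sum fun j _ => ?_
    simpa using ((hasDerivAt_coord j).mul
      (hasDerivAt_coord_conj j)).const_mul (j : ℂ)
  convert H using 1
  unfold s1A s1B
  rw [Finset.mul_sum, Finset.mul_sum, ← Finset.sum_add_distrib]
  exact Finset.sum_congr rfl fun j _ => by ring

lemma hasDerivAt_cub :
    HasDerivAt (fun t : ℝ => cub N k (fun n => c n + ↑t * (v * eK k n)))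
      (v * cubA N k c + conj v * cubB N k c) 0 := by
  have H : HasDerivAt (fun t : ℝ => cub N k (fun n => c n + ↑t * (v * eK k n)))
      (∑ p ∈ T3 N k,
        ((v * eK k p.1 * c p.2.1 + c p.1 * (v * eK k p.2.1)) * conj (c p.2.2)
          + c p.1 * c p.2.1 * (conj v * eK k p.2.2))) 0 := by
    unfold cub
    refine HasDerivAt.fun_sum fun p _ => ?_
    simpa using ((hasDerivAt_coord p.1).fun_mul
      (hasDerivAt_coord p.2.1)).fun_mul (hasDerivAt_coord_conj p.2.2)
  convert H using 1
  unfold cubA cubB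
  rw [Finset.mul_sum, Finset.mul_sum, ← Finset.sum_add_distrib]
  exact Finset.sum_congr rfl fun p _ => by ring

lemma hasDerivAt_cubW :
    HasDerivAt (fun t : ℝ => cubW N k (fun n => c n + ↑t * (v * eK k n)))
      (v * cubWA N k c + conj v * cubWB N k c) 0 := by
  have H : HasDerivAt (fun t : ℝ => cubW N k (fun n => c n + ↑t * (v * eK k n)))
      (∑ p ∈ T3 N k,
        (((0 * (c p.1) + (p.2.2 : ℂ) * (v * eK k p.1)) * c p.2.1
            + (p.2.2 : ℂ) * c p.1 * (v * eK k p.2.1)) * conj (c p.2.2)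
          + (p.2.2 : ℂ) * c p.1 * c p.2.1 * (conj v * eK k p.2.2))) 0 := by
    unfold cubW
    refine HasDerivAt.fun_sum fun p _ => ?_
    simpa using (((hasDerivAt_const (0:ℝ) ((p.2.2 : ℂ))).fun_mul
      (hasDerivAt_coord p.1)).fun_mul
      (hasDerivAt_coord p.2.1)).fun_mul (hasDerivAt_coord_conj p.2.2)
  convert H using 1
  unfold cubWA cubWB
  rw [Finset.mul_sum, Finset.mul_sum, ← Finset.sum_add_distrib]
  exact Finset.sum_congr rfl fun p _ => by ring

lemma hasDerivAt_quin :
    HasDerivAt (fun t : ℝ => quin N k (fun n => c n + ↑t * (v * eK k n)))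
      (v * quinA N k c + conj v * quinB N k c) 0 := by
  have H : HasDerivAt (fun t : ℝ => quin N k (fun n => c n + ↑t * (v * eK k n)))
      (∑ p ∈ T5 N k,
        ((((v * eK k p.1 * c p.2.1 + c p.1 * (v * eK k p.2.1)) * c p.2.2.1
            + c p.1 * c p.2.1 * (v * eK k p.2.2.1)) * conj (c p.2.2.2.1)
            + c p.1 * c p.2.1 * c p.2.2.1 * (conj v * eK k p.2.2.2.1)) * conj (c p.2.2.2.2)
          + c p.1 * c p.2.1 * c p.2.2.1 * conj (c p.2.2.2.1)
              * (conj v * eK k p.2.2.2.2))) 0 := by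
    unfold quin
    refine HasDerivAt.fun_sum fun p _ => ?_
    simpa using ((((hasDerivAt_coord p.1).fun_mul
      (hasDerivAt_coord p.2.1)).fun_mul
      (hasDerivAt_coord p.2.2.1)).fun_mul
      (hasDerivAt_coord_conj p.2.2.2.1)).fun_mul
      (hasDerivAt_coord_conj p.2.2.2.2)
  convert H using 1
  unfold quinA quinB
  rw [Finset.mul_sum, Finset.mul_sum, ← Finset.sum_add_distrib]
  exact Finset.sum_congr rfl fun p _ => by ring

lemma hasDerivAt_q4 :
    HasDerivAt (fun t : ℝ => ∑ p ∈ T4 N,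
        ((c p.1 + ↑t * (v * eK k p.1)) * (c p.2.1 + ↑t * (v * eK k p.2.1))
          * conj (c p.2.2.1 + ↑t * (v * eK k p.2.2.1))
          * conj (c p.2.2.2 + ↑t * (v * eK k p.2.2.2))))
      (v * q4A N k c + conj v * q4B N k c) 0 := by
  have H : HasDerivAt (fun t : ℝ => ∑ p ∈ T4 N,
      ((c p.1 + ↑t * (v * eK k p.1)) * (c p.2.1 + ↑t * (v * eK k p.2.1))
        * conj (c p.2.2.1 + ↑t * (v * eK k p.2.2.1))
        * conj (c p.2.2.2 + ↑t * (v * eK k p.2.2.2))))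
      (∑ p ∈ T4 N,
        (((v * eK k p.1 * c p.2.1 + c p.1 * (v * eK k p.2.1)) * conj (c p.2.2.1)
            + c p.1 * c p.2.1 * (conj v * eK k p.2.2.1)) * conj (c p.2.2.2)
          + c p.1 * c p.2.1 * conj (c p.2.2.1) * (conj v * eK k p.2.2.2))) 0 := by
    refine HasDerivAt.fun_sum fun p _ => ?_
    simpa using (((hasDerivAt_coord p.1).fun_mul
      (hasDerivAt_coord p.2.1)).fun_mul
      (hasDerivAt_coord_conj p.2.2.1)).fun_mul
      (hasDerivAt_coord_conj p.2.2.2)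
  convert H using 1
  unfold q4A q4B
  rw [Finset.mul_sum, Finset.mul_sum, ← Finset.sum_add_distrib]
  exact Finset.sum_congr rfl fun p _ => by ring

lemma hasDerivAt_psiP :
    HasDerivAt (fun t : ℝ => psiP N (fun n => c n + ↑t * (v * eK k n)))
      (v * psiA N k c + conj v * psiB N k c) 0 := by
  have H := (((hasDerivAt_s1 (N := N) (k := k) (c := c) (v := v)).const_mul
      (-2 : ℂ)).add ((hasDerivAt_q4 (N := N) (k := k) (c := c) (v := v)).const_mul
      ((1 : ℂ)/2))).sub
    ((hasDerivAt_mC (N := N) (k := k) (c := c) (v := v)).mul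
      (hasDerivAt_mC (N := N) (k := k) (c := c) (v := v)))
  simp only [Complex.ofReal_zero, zero_mul, add_zero] at H
  have hfun : (fun t : ℝ => psiP N (fun n => c n + ↑t * (v * eK k n)))
      = (fun t : ℝ =>
        -2 * ∑ j ∈ freqS N,
            (j : ℂ) * ((c j + ↑t * (v * eK k j)) * conj (c j + ↑t * (v * eK k j)))
          + (1:ℂ)/2 * ∑ p ∈ T4 N,
              ((c p.1 + ↑t * (v * eK k p.1)) * (c p.2.1 + ↑t * (v * eK k p.2.1))
                * conj (c p.2.2.1 + ↑t * (v * eK k p.2.2.1))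
                * conj (c p.2.2.2 + ↑t * (v * eK k p.2.2.2)))
          - mC N (fun n => c n + ↑t * (v * eK k n))
              * mC N (fun n => c n + ↑t * (v * eK k n))) := by
    funext t
    unfold psiP
    rfl
  rw [hfun]
  refine H.congr_deriv ?_
  unfold psiA psiB
  ring
end Deriv

section Master
set_option maxHeartbeats 2000000

variable {N : ℕ} {k : ℤ} {c : ℤ → ℂ} {v : ℂ}

lemma update_eq (t : ℝ) :
    Function.update c k (c k + ↑t * v) = fun n => c n + ↑t * (v * eK k n) := by
  funext n
  rw [Function.update_apply]
  unfold eK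
  by_cases h : n = k <;> simp [h]

lemma master (N : ℕ) (k : ℤ) (c : ℤ → ℂ) (v : ℂ) :
    HasDerivAt (fun t : ℝ => fieldF N k (Function.update c k (c k + ↑t * v)))
      (v * AA N k c + conj v * BB N k c) 0 := by
  simp only [update_eq, fieldF_eq]
  have H := ((((hasDerivAt_coord (k := k) (c := c) (v := v) k).const_mul
        (-Complex.I * (k : ℂ) ^ 2)).add
      ((hasDerivAt_cubW (N := N) (k := k) (c := c) (v := v)).const_mul Complex.I)).add
      ((hasDerivAt_quin (N := N) (k := k) (c := c) (v := v)).const_mul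
        (Complex.I / 2))).sub
      (((hasDerivAt_psiP (N := N) (k := k) (c := c) (v := v)).const_mul
        Complex.I).mul (hasDerivAt_coord (k := k) (c := c) (v := v) k))
  have H2 := H.sub (((hasDerivAt_mC (N := N) (k := k) (c := c) (v := v)).const_mul
      Complex.I).mul (hasDerivAt_cub (N := N) (k := k) (c := c) (v := v)))
  simp only [Complex.ofReal_zero, zero_mul, add_zero] at H2
  refine H2.congr_deriv ?_
  unfold AA BB
  ring

end Master

section Reality
set_option maxHeartbeats 2000000

variable {N : ℕ} {k : ℤ} {c : ℤ → ℂ}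

lemma sum_eK (hk : k ∈ freqS N) (g : ℤ → ℂ) :
    ∑ j ∈ freqS N, eK k j * g j = g k := by
  rw [Finset.sum_eq_single k]
  · simp [eK]
  · intro b _ hb
    simp [eK, hb]
  · intro h
    exact absurd hk h

lemma mA_eq (hk : k ∈ freqS N) : mA N k c = conj (c k) := by
  unfold mA; exact sum_eK hk _

lemma s1A_eq (hk : k ∈ freqS N) : s1A N k c = (k : ℂ) * conj (c k) := by
  unfold s1A; exact sum_eK hk _

lemma mC_im : (mC N c).im = 0 := by
  unfold mC
  rw [Complex.im_sum]
  refine Finset.sum_eq_zero fun j _ => ?_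
  rw [Complex.mul_conj]
  simp

lemma cubA_im : (cubA N k c).im = 0 := by
  unfold cubA
  rw [Complex.im_sum]
  refine Finset.sum_eq_zero fun p hp => ?_
  simp only [T3, Finset.mem_filter] at hp
  obtain ⟨-, hcon⟩ := hp
  by_cases h1 : p.1 = k <;> by_cases h2 : p.2.1 = k
  · have h3 : p.2.2 = k := by omega
    simp [eK, h1, h2, h3, Complex.mul_conj]
  · have h3 : p.2.1 = p.2.2 := by omega
    have h2' : ¬p.2.2 = k := by omega
    simp [eK, h1, h2, h2', h3, Complex.mul_conj]
  · have h3 : p.1 = p.2.2 := by omega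
    have h1' : ¬p.2.2 = k := by omega
    simp [eK, h1, h2, h1', h3, Complex.mul_conj]
  · simp [eK, h1, h2]

lemma cubWA_im : (cubWA N k c).im = 0 := by
  unfold cubWA
  rw [Complex.im_sum]
  refine Finset.sum_eq_zero fun p hp => ?_
  simp only [T3, Finset.mem_filter] at hp
  obtain ⟨-, hcon⟩ := hp
  by_cases h1 : p.1 = k <;> by_cases h2 : p.2.1 = k
  · have h3 : p.2.2 = k := by omega
    simp [eK, h1, h2, h3, Complex.mul_conj, Complex.mul_im]
  · have h3 : p.2.1 = p.2.2 := by omega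
    have h2' : ¬p.2.2 = k := by omega
    simp [eK, h1, h2, h2', h3, Complex.mul_conj, Complex.mul_im]
  · have h3 : p.1 = p.2.2 := by omega
    have h1' : ¬p.2.2 = k := by omega
    simp [eK, h1, h2, h1', h3, Complex.mul_conj, Complex.mul_im]
  · simp [eK, h1, h2]

lemma conj_T4sum :
    conj (∑ p ∈ T4 N, c p.1 * c p.2.1 * conj (c p.2.2.1) * conj (c p.2.2.2))
      = ∑ p ∈ T4 N, c p.1 * c p.2.1 * conj (c p.2.2.1) * conj (c p.2.2.2) := by
  rw [map_sum]
  refine Finset.sum_nbij' (fun p => (p.2.2.1, p.2.2.2, p.1, p.2.1))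
    (fun p => (p.2.2.1, p.2.2.2, p.1, p.2.1)) ?_ ?_ ?_ ?_ ?_
  · intro p hp
    simp only [T4, Finset.mem_filter, Finset.mem_product] at hp ⊢
    refine ⟨⟨hp.1.2.2.1, hp.1.2.2.2, hp.1.1, hp.1.2.1⟩, by omega⟩
  · intro p hp
    simp only [T4, Finset.mem_filter, Finset.mem_product] at hp ⊢
    refine ⟨⟨hp.1.2.2.1, hp.1.2.2.2, hp.1.1, hp.1.2.1⟩, by omega⟩
  · intro p _; rfl
  · intro p _; rfl
  · intro p _
    simp only [map_mul, Complex.conj_conj]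
    ring

lemma psiP_im : (psiP N c).im = 0 := by
  unfold psiP
  have h1 : (∑ j ∈ freqS N, (j : ℂ) * (c j * conj (c j))).im = 0 := by
    rw [Complex.im_sum]
    refine Finset.sum_eq_zero fun j _ => ?_
    rw [Complex.mul_conj]
    simp [Complex.mul_im]
  have h2 : (∑ p ∈ T4 N,
      c p.1 * c p.2.1 * conj (c p.2.2.1) * conj (c p.2.2.2)).im = 0 :=
    Complex.conj_eq_iff_im.mp conj_T4sum
  have h3 : (mC N c).im = 0 := mC_im
  simp [Complex.sub_im, Complex.add_im, Complex.mul_im, h1, h2, h3]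

end Reality

section Bijections
set_option maxHeartbeats 2000000

variable {N : ℕ} {k : ℤ} {c : ℤ → ℂ}

lemma sum_eK_mul {α : Type*} (k : ℤ) (s : Finset α) (h : α → ℤ) (g : α → ℂ) :
    ∑ p ∈ s, eK k (h p) * g p = ∑ p ∈ s.filter (fun p => h p = k), g p := by
  rw [Finset.sum_filter]
  refine Finset.sum_congr rfl fun p _ => ?_
  unfold eK
  by_cases hh : h p = k <;> simp [hh]

lemma q4A_eq (hk : k ∈ freqS N) : q4A N k c = 2 * conj (cub N k c) := by
  unfold q4A cub
  rw [map_sum, Finset.sum_add_distrib,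
    sum_eK_mul k (T4 N) (fun p => p.1)
      (fun p => c p.2.1 * (conj (c p.2.2.1) * conj (c p.2.2.2))),
    sum_eK_mul k (T4 N) (fun p => p.2.1)
      (fun p => c p.1 * (conj (c p.2.2.1) * conj (c p.2.2.2)))]
  have e1 : ∑ p ∈ (T4 N).filter (fun p => p.1 = k),
      (c p.2.1 * (conj (c p.2.2.1) * conj (c p.2.2.2)))
      = ∑ q ∈ T3 N k, conj (c q.1 * c q.2.1 * conj (c q.2.2)) := by
    refine Finset.sum_nbij' (fun p => (p.2.2.1, p.2.2.2, p.2.1))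
      (fun q => (k, q.2.2, q.1, q.2.1)) ?_ ?_ ?_ ?_ ?_
    · rintro ⟨a, b, d, f⟩ hp
      simp only [T4, T3, Finset.mem_filter, Finset.mem_product, freqS,
        Finset.mem_Icc] at hp ⊢
      obtain ⟨⟨⟨ha, hb, hd, hf⟩, hco⟩, h1⟩ := hp
      exact ⟨⟨hd, hf, hb⟩, by omega⟩
    · rintro ⟨a, b, d⟩ hq
      simp only [T4, T3, Finset.mem_filter, Finset.mem_product, freqS,
        Finset.mem_Icc] at hq hk ⊢
      obtain ⟨⟨ha, hb, hd⟩, hco⟩ := hq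
      exact ⟨⟨⟨hk, hd, ha, hb⟩, by omega⟩, trivial⟩
    · rintro ⟨a, b, d, f⟩ hp
      simp only [T4, Finset.mem_filter] at hp
      simp [Prod.ext_iff, hp.2.symm]
    · rintro ⟨a, b, d⟩ _; rfl
    · rintro ⟨a, b, d, f⟩ _
      simp only [map_mul, Complex.conj_conj]
      ring
  have e2 : ∑ p ∈ (T4 N).filter (fun p => p.2.1 = k),
      (c p.1 * (conj (c p.2.2.1) * conj (c p.2.2.2)))
      = ∑ q ∈ T3 N k, conj (c q.1 * c q.2.1 * conj (c q.2.2)) := by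
    refine Finset.sum_nbij' (fun p => (p.2.2.1, p.2.2.2, p.1))
      (fun q => (q.2.2, k, q.1, q.2.1)) ?_ ?_ ?_ ?_ ?_
    · rintro ⟨a, b, d, f⟩ hp
      simp only [T4, T3, Finset.mem_filter, Finset.mem_product, freqS,
        Finset.mem_Icc] at hp ⊢
      obtain ⟨⟨⟨ha, hb, hd, hf⟩, hco⟩, h1⟩ := hp
      exact ⟨⟨hd, hf, ha⟩, by omega⟩
    · rintro ⟨a, b, d⟩ hq
      simp only [T4, T3, Finset.mem_filter, Finset.mem_product, freqS,
        Finset.mem_Icc] at hq hk ⊢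
      obtain ⟨⟨ha, hb, hd⟩, hco⟩ := hq
      exact ⟨⟨⟨hd, hk, ha, hb⟩, by omega⟩, trivial⟩
    · rintro ⟨a, b, d, f⟩ hp
      simp only [T4, Finset.mem_filter] at hp
      simp [Prod.ext_iff, hp.2.symm]
    · rintro ⟨a, b, d⟩ _; rfl
    · rintro ⟨a, b, d, f⟩ _
      simp only [map_mul, Complex.conj_conj]
      ring
  rw [e1, e2]
  ring

lemma quinA_im : (quinA N k c).im = 0 := by
  unfold quinA
  rw [Finset.sum_add_distrib, Finset.sum_add_distrib,
    sum_eK_mul k (T5 N k) (fun p => p.1)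
      (fun p => c p.2.1 * c p.2.2.1 * (conj (c p.2.2.2.1) * conj (c p.2.2.2.2))),
    sum_eK_mul k (T5 N k) (fun p => p.2.1)
      (fun p => c p.1 * c p.2.2.1 * (conj (c p.2.2.2.1) * conj (c p.2.2.2.2))),
    sum_eK_mul k (T5 N k) (fun p => p.2.2.1)
      (fun p => c p.1 * c p.2.1 * (conj (c p.2.2.2.1) * conj (c p.2.2.2.2)))]
  have e1 : conj (∑ p ∈ (T5 N k).filter (fun p => p.1 = k),
      (c p.2.1 * c p.2.2.1 * (conj (c p.2.2.2.1) * conj (c p.2.2.2.2))))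
      = ∑ p ∈ (T5 N k).filter (fun p => p.1 = k),
      (c p.2.1 * c p.2.2.1 * (conj (c p.2.2.2.1) * conj (c p.2.2.2.2))) := by
    rw [map_sum]
    refine Finset.sum_nbij' (fun p => (p.1, p.2.2.2.1, p.2.2.2.2, p.2.1, p.2.2.1))
      (fun p => (p.1, p.2.2.2.1, p.2.2.2.2, p.2.1, p.2.2.1)) ?_ ?_ ?_ ?_ ?_
    · rintro ⟨a, b, d, f, g⟩ hp
      simp only [T5, Finset.mem_filter, Finset.mem_product, freqS,
        Finset.mem_Icc] at hp ⊢
      obtain ⟨⟨⟨ha, hb, hd, hf, hg⟩, hco⟩, h1⟩ := hp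
      exact ⟨⟨⟨ha, hf, hg, hb, hd⟩, by omega⟩, h1⟩
    · rintro ⟨a, b, d, f, g⟩ hp
      simp only [T5, Finset.mem_filter, Finset.mem_product, freqS,
        Finset.mem_Icc] at hp ⊢
      obtain ⟨⟨⟨ha, hb, hd, hf, hg⟩, hco⟩, h1⟩ := hp
      exact ⟨⟨⟨ha, hf, hg, hb, hd⟩, by omega⟩, h1⟩
    · rintro ⟨a, b, d, f, g⟩ _; rfl
    · rintro ⟨a, b, d, f, g⟩ _; rfl
    · rintro ⟨a, b, d, f, g⟩ _
      simp only [map_mul, Complex.conj_conj]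
      ring
  have e2 : conj (∑ p ∈ (T5 N k).filter (fun p => p.2.1 = k),
      (c p.1 * c p.2.2.1 * (conj (c p.2.2.2.1) * conj (c p.2.2.2.2))))
      = ∑ p ∈ (T5 N k).filter (fun p => p.2.1 = k),
      (c p.1 * c p.2.2.1 * (conj (c p.2.2.2.1) * conj (c p.2.2.2.2))) := by
    rw [map_sum]
    refine Finset.sum_nbij' (fun p => (p.2.2.2.1, p.2.1, p.2.2.2.2, p.1, p.2.2.1))
      (fun p => (p.2.2.2.1, p.2.1, p.2.2.2.2, p.1, p.2.2.1)) ?_ ?_ ?_ ?_ ?_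
    · rintro ⟨a, b, d, f, g⟩ hp
      simp only [T5, Finset.mem_filter, Finset.mem_product, freqS,
        Finset.mem_Icc] at hp ⊢
      obtain ⟨⟨⟨ha, hb, hd, hf, hg⟩, hco⟩, h1⟩ := hp
      exact ⟨⟨⟨hf, hb, hg, ha, hd⟩, by omega⟩, h1⟩
    · rintro ⟨a, b, d, f, g⟩ hp
      simp only [T5, Finset.mem_filter, Finset.mem_product, freqS,
        Finset.mem_Icc] at hp ⊢
      obtain ⟨⟨⟨ha, hb, hd, hf, hg⟩, hco⟩, h1⟩ := hp
      exact ⟨⟨⟨hf, hb, hg, ha, hd⟩, by omega⟩, h1⟩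
    · rintro ⟨a, b, d, f, g⟩ _; rfl
    · rintro ⟨a, b, d, f, g⟩ _; rfl
    · rintro ⟨a, b, d, f, g⟩ _
      simp only [map_mul, Complex.conj_conj]
      ring
  have e3 : conj (∑ p ∈ (T5 N k).filter (fun p => p.2.2.1 = k),
      (c p.1 * c p.2.1 * (conj (c p.2.2.2.1) * conj (c p.2.2.2.2))))
      = ∑ p ∈ (T5 N k).filter (fun p => p.2.2.1 = k),
      (c p.1 * c p.2.1 * (conj (c p.2.2.2.1) * conj (c p.2.2.2.2))) := by
    rw [map_sum]
    refine Finset.sum_nbij' (fun p => (p.2.2.2.1, p.2.2.2.2, p.2.2.1, p.1, p.2.1))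
      (fun p => (p.2.2.2.1, p.2.2.2.2, p.2.2.1, p.1, p.2.1)) ?_ ?_ ?_ ?_ ?_
    · rintro ⟨a, b, d, f, g⟩ hp
      simp only [T5, Finset.mem_filter, Finset.mem_product, freqS,
        Finset.mem_Icc] at hp ⊢
      obtain ⟨⟨⟨ha, hb, hd, hf, hg⟩, hco⟩, h1⟩ := hp
      exact ⟨⟨⟨hf, hg, hd, ha, hb⟩, by omega⟩, h1⟩
    · rintro ⟨a, b, d, f, g⟩ hp
      simp only [T5, Finset.mem_filter, Finset.mem_product, freqS,
        Finset.mem_Icc] at hp ⊢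
      obtain ⟨⟨⟨ha, hb, hd, hf, hg⟩, hco⟩, h1⟩ := hp
      exact ⟨⟨⟨hf, hg, hd, ha, hb⟩, by omega⟩, h1⟩
    · rintro ⟨a, b, d, f, g⟩ _; rfl
    · rintro ⟨a, b, d, f, g⟩ _; rfl
    · rintro ⟨a, b, d, f, g⟩ _
      simp only [map_mul, Complex.conj_conj]
      ring
  simp [Complex.add_im, Complex.conj_eq_iff_im.mp e1, Complex.conj_eq_iff_im.mp e2,
    Complex.conj_eq_iff_im.mp e3]

end Bijections

section Final
set_option maxHeartbeats 2000000

variable {N : ℕ} {k : ℤ} {c : ℤ → ℂ}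

lemma AA_re_zero (hk : k ∈ freqS N) : (AA N k c).re = 0 := by
  have h1 : (cubWA N k c).im = 0 := cubWA_im
  have h2 : (quinA N k c).im = 0 := quinA_im
  have h3 : (psiP N c).im = 0 := psiP_im
  have h4 : (mC N c).im = 0 := mC_im
  have h5 : (cubA N k c).im = 0 := cubA_im
  have hekk : eK k k = 1 := by simp [eK]
  unfold AA psiA
  rw [mA_eq hk, s1A_eq hk, q4A_eq hk, hekk]
  simp only [Complex.add_re, Complex.sub_re, Complex.add_im, Complex.sub_im,
    Complex.mul_re, Complex.mul_im, Complex.neg_re, Complex.neg_im,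
    Complex.I_re, Complex.I_im, Complex.conj_re, Complex.conj_im,
    Complex.intCast_re, Complex.intCast_im, Complex.re_ofNat, Complex.im_ofNat,
    Complex.one_re, Complex.one_im, Complex.div_re, Complex.div_im,
    Complex.ofReal_re, Complex.ofReal_im, Complex.normSq_ofNat,
    mul_one]
  rw [h1, h2, h3, h4, h5]
  have hk2 : ((k : ℂ) ^ 2).im = 0 := by
    rw [sq, Complex.mul_im]
    simp
  rw [hk2]
  ring_nf

lemma hasDerivAt_re {f : ℝ → ℂ} {f' : ℂ} (h : HasDerivAt f f' 0) :
    HasDerivAt (fun t => (f t).re) f'.re 0 := by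
  exact Complex.reCLM.hasFDerivAt.comp_hasDerivAt 0 h

lemma hasDerivAt_im {f : ℝ → ℂ} {f' : ℂ} (h : HasDerivAt f f' 0) :
    HasDerivAt (fun t => (f t).im) f'.im 0 := by
  exact Complex.imCLM.hasFDerivAt.comp_hasDerivAt 0 h

end Final


/-- the real divergence of the truncated gauged DNLS vector field vanishes:
∑_k (∂Re F_k/∂a_k + ∂Im F_k/∂b_k) = 0 (Liouville: the flow preserves Lebesgue measure). -/
theorem divergence_free (N : ℕ) (c : ℤ → ℂ) :
    ∑ k ∈ freqS N,
        (deriv (fun t : ℝ => (fieldF N k (Function.update c k (c k + t))).re) 0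
          + deriv (fun t : ℝ => (fieldF N k (Function.update c k (c k + t * Complex.I))).im) 0)
      = 0 := by
  refine Finset.sum_eq_zero fun k hk => ?_
  have hA : (AA N k c).re = 0 := AA_re_zero hk
  have h1 : HasDerivAt (fun t : ℝ => (fieldF N k (Function.update c k (c k + ↑t))).re)
      ((AA N k c + BB N k c).re) 0 := by
    have := hasDerivAt_re (master N k c 1)
    simpa using this
  have h2 : HasDerivAt
      (fun t : ℝ => (fieldF N k (Function.update c k (c k + ↑t * Complex.I))).im)
      ((Complex.I * AA N k c + conj Complex.I * BB N k c).im) 0 :=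
    hasDerivAt_im (master N k c Complex.I)
  rw [h1.deriv, h2.deriv]
  simp only [Complex.add_re, Complex.add_im, Complex.mul_im, Complex.conj_I,
    Complex.I_re, Complex.I_im, Complex.neg_re, Complex.neg_im, Complex.mul_re]
  linarith [hA]
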